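/- arXiv:2109.12208 — 2 statements merged into one kernel-verified Lean document; each statement's English description precedes it below -/
import Mathlib

section
/- Let W_X = X ⊔ Z and W_Y = Y ⊔ Z' be controlled compactifications of proper metric spaces (X, d_X) and (Y, d_Y), and let f: X → Y be a proper continuous map admitting a continuous extension f̄: W_X → W_Y. Then: (i) f̄(Z) ⊆ Z'; (ii) any two continuous extensions of f to W_X → W_Y agree; and (iii) every continuous map f': X → Y which is boundedly close to f (i.e., sup_{x∈X} d_Y(f(x), f'(x)) < ∞) extends continuously to W_X → W_Y by setting the extension equal to f̄ on Z. -/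
open Set Topology TopologicalSpace unitInterval

/-- A closed subset `Z` of a space `W` is a `Z`-set if there is a homotopy
`α : W × [0,1] → W` with `α₀ = id` and `α t W ⊆ W ∖ Z` for `t > 0`. -/
def IsZSet {W : Type} [TopologicalSpace W] (Z : Set W) : Prop :=
  IsClosed Z ∧
    ∃ α : C(W × unitInterval, W),
      (∀ w, α (w, 0) = w) ∧ ∀ t : unitInterval, t ≠ 0 → ∀ w, α (w, t) ∉ Z

/-- The suspension identifications on `Z × [0,1]`. -/
def suspSetoid (Z : Type) : Setoid (Z × unitInterval) where
  r p q := p = q ∨ (p.2 = q.2 ∧ (p.2 = 0 ∨ p.2 = 1))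
  iseqv := by
    refine ⟨fun p => Or.inl rfl, ?_, ?_⟩
    · rintro p q (rfl | ⟨h, h01⟩)
      · exact Or.inl rfl
      · exact Or.inr ⟨h.symm, h ▸ h01⟩
    · rintro p q r (rfl | ⟨h, h01⟩) (rfl | ⟨h', h01'⟩)
      · exact Or.inl rfl
      · exact Or.inr ⟨h', h01'⟩
      · exact Or.inr ⟨h, h01⟩
      · exact Or.inr ⟨h.trans h', h01⟩

/-- The (unreduced) suspension of a space. -/
abbrev Susp (Z : Type) [TopologicalSpace Z] : Type := Quotient (suspSetoid Z)

/-- A (metrizable) compactification of a locally compact separable metrizable space: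
a compact metrizable space containing it as a dense open subspace. -/
structure Compactification (X : Type) [TopologicalSpace X] where
  W : Type
  [topW : TopologicalSpace W]
  ι : X → W
  emb : Topology.IsOpenEmbedding ι
  dense : Dense (Set.range ι)
  compactW : CompactSpace W
  metrizableW : TopologicalSpace.MetrizableSpace W

attribute [instance] Compactification.topW

/-- The remainder of a compactification. -/
def Compactification.remainder {X : Type} [TopologicalSpace X]
    (c : Compactification X) : Set c.W :=
  (Set.range c.ι)ᶜ

/-- A `Z`-compactification: the remainder is a `Z`-set. -/
def Compactification.IsZComp {X : Type} [TopologicalSpace X]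
    (c : Compactification X) : Prop :=
  IsZSet c.remainder

/-- A controlled compactification of a proper metric space: for every `R > 0` and every
open cover `𝒰` of `W`, there is a compact `C ⊆ X` such that every subset of `X ∖ C` of
diameter `< R` lies in a member of `𝒰`. -/
def Compactification.Controlled {X : Type} [MetricSpace X]
    (c : Compactification X) : Prop :=
  ∀ R : ℝ, 0 < R →
    ∀ 𝒰 : Set (Set c.W), (∀ U ∈ 𝒰, IsOpen U) → ⋃₀ 𝒰 = Set.univ →
      ∃ C : Set X, IsCompact C ∧
        ∀ A : Set X, A ⊆ Cᶜ → EMetric.diam A < ENNReal.ofReal R →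
          ∃ U ∈ 𝒰, c.ι '' A ⊆ U

/-! A sequence tending to infinity in `X` converges in `W_X` only to points of the remainder, and
a proper map carries such sequences to sequences tending to infinity in `Y`; this gives (i), and
(ii) is density. For (iii), if `f x` converges to `p ∈ W_Y` while `f x` leaves every compact set,
then the pairs `{f x, f' x}` have bounded diameter, so control applied to the cover of `W_Y` by a
neighbourhood `V` of `p` and the complement of a closed neighbourhood `K ⊆ V` of `p` forces
`f' x` into `V` as well. -/

open Filter Metric

theorem Topology.IsOpenEmbedding.continuous_extend {X W T : Type*} [TopologicalSpace X]
    [TopologicalSpace W] [TopologicalSpace T] {ι : X → W} (hι : IsOpenEmbedding ι)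
    {g : X → T} {G : W → T} (hg : Continuous g) (hG : ContinuousOn G (range ι)ᶜ)
    (hlim : ∀ z ∉ range ι, Tendsto g (comap ι (𝓝 z)) (𝓝 (G z))) :
    Continuous (Function.extend ι g G) := by
  have hext : Function.extend ι g G ∘ ι = g := funext (hι.injective.extend_apply g G)
  have hrem : EqOn (Function.extend ι g G) G (range ι)ᶜ := fun z hz =>
    Function.extend_apply' _ _ _ fun ⟨x, hx⟩ => hz ⟨x, hx⟩
  refine continuous_iff_continuousAt.2 fun w => ?_
  by_cases hw : w ∈ range ι
  · obtain ⟨x, rfl⟩ := hw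
    exact hι.continuousAt_iff.1 (by rw [hext]; exact hg.continuousAt)
  · rw [← continuousWithinAt_univ, ← union_compl_self (range ι), continuousWithinAt_union]
    refine ⟨?_, (hG w hw).congr hrem (hrem hw)⟩
    rw [ContinuousWithinAt, nhdsWithin, ← map_comap, tendsto_map'_iff, hext, hrem hw]
    exact hlim w hw

namespace Compactification

attribute [instance] Compactification.compactW Compactification.metrizableW

variable {X Y : Type} [TopologicalSpace X]

theorem comap_nhds_neBot (c : Compactification X) (w : c.W) : (comap c.ι (𝓝 w)).NeBot :=
  IsDenseInducing.comap_nhds_neBot ⟨c.emb.isInducing, c.dense⟩ w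

theorem comap_nhds_le_cocompact (c : Compactification X) {z : c.W} (hz : z ∈ c.remainder) :
    comap c.ι (𝓝 z) ≤ cocompact X := by
  refine hasBasis_cocompact.ge_iff.2 fun K hK => ?_
  have hKz : (c.ι '' K)ᶜ ∈ 𝓝 z :=
    (hK.image c.emb.continuous).isClosed.compl_mem_nhds fun ⟨x, _, hx⟩ => hz ⟨x, hx⟩
  have := preimage_mem_comap (m := c.ι) hKz
  rwa [preimage_compl, c.emb.injective.preimage_image] at this

theorem image_remainder_subset_remainder [TopologicalSpace Y] {cX : Compactification X}
    {cY : Compactification Y} {f : X → Y} (hf : Tendsto f (cocompact X) (cocompact Y))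
    {F : cX.W → cY.W} (hF : Continuous F) (hFι : F ∘ cX.ι = cY.ι ∘ f) :
    F '' cX.remainder ⊆ cY.remainder := by
  rintro _ ⟨z, hz, rfl⟩ ⟨y, hy⟩
  have := cX.comap_nhds_neBot z
  have := cY.emb.locallyCompactSpace
  have hfy : Tendsto f (comap cX.ι (𝓝 z)) (𝓝 y) := by
    rw [cY.emb.tendsto_nhds_iff, ← hFι, hy]
    exact (hF.tendsto z).comp tendsto_comap
  exact hfy.not_tendsto (disjoint_nhds_cocompact y) (hf.mono_left (cX.comap_nhds_le_cocompact hz))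

theorem Controlled.tendsto_of_eventually_dist_le [MetricSpace Y] [ProperSpace Y]
    {c : Compactification Y} (hc : c.Controlled) {α : Type*} {l : Filter α} {u v : α → Y}
    {p : c.W} {C : ℝ} (hu : Tendsto u l (cocompact Y)) (huv : ∀ᶠ a in l, dist (u a) (v a) ≤ C)
    (hup : Tendsto (c.ι ∘ u) l (𝓝 p)) : Tendsto (c.ι ∘ v) l (𝓝 p) := by
  refine (nhds_basis_opens p).tendsto_right_iff.2 fun V ⟨hpV, hV⟩ => ?_
  obtain ⟨K, hK, hKc, hKV⟩ := exists_mem_nhds_isClosed_subset (hV.mem_nhds hpV)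
  have hcover : ⋃₀ {V, Kᶜ} = univ :=
    sUnion_pair V Kᶜ ▸ eq_univ_of_subset (union_subset_union_left _ hKV) (union_compl_self K)
  obtain ⟨C₀, hC₀, hsmall⟩ := hc (max C 0 + 1) (by positivity) {V, Kᶜ}
    (by rintro U (rfl | rfl); exacts [hV, hKc.isOpen_compl]) hcover
  have hfar : ∀ᶠ a in l, u a ∉ cthickening (max C 0) C₀ :=
    hu.eventually hC₀.cthickening.compl_mem_cocompact
  filter_upwards [hfar, huv, hup hK] with a hfar huv huK
  have hua : u a ∉ C₀ := fun h => hfar (self_subset_cthickening _ h)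
  have hva : v a ∉ C₀ := fun h =>
    hfar (mem_cthickening_of_dist_le _ _ _ _ h (huv.trans (le_max_left _ _)))
  have hdiam : ediam {u a, v a} < ENNReal.ofReal (max C 0 + 1) := by
    rw [ediam_pair, edist_dist, ENNReal.ofReal_lt_ofReal_iff (by positivity)]
    linarith [le_max_left C 0]
  obtain ⟨U, hU, hsub⟩ := hsmall {u a, v a} (by rintro _ (rfl | rfl) <;> assumption) hdiam
  rcases hU with rfl | rfl
  · exact hsub (mem_image_of_mem _ (by simp))
  · exact absurd huK (hsub (mem_image_of_mem _ (by simp)))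

end Compactification

theorem controlled_compactification_extension_general
    (X Y : Type) [MetricSpace X] [MetricSpace Y] [ProperSpace Y]
    (cX : Compactification X) (cY : Compactification Y)
    (hcY : cY.Controlled)
    (f : X → Y)
    (hfproper : ∀ K : Set Y, IsCompact K → IsCompact (f ⁻¹' K))
    (F : cX.W → cY.W) (hF : Continuous F) (hFext : ∀ x : X, F (cX.ι x) = cY.ι (f x)) :
    (F '' cX.remainder ⊆ cY.remainder) ∧
    (∀ F' : cX.W → cY.W, Continuous F' →
      (∀ x : X, F' (cX.ι x) = cY.ι (f x)) → F' = F) ∧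
    (∀ f' : X → Y, Continuous f' → (∃ C : ℝ, ∀ x : X, dist (f x) (f' x) ≤ C) →
      ∃ F' : cX.W → cY.W, Continuous F' ∧
        (∀ x : X, F' (cX.ι x) = cY.ι (f' x)) ∧
        ∀ z ∈ cX.remainder, F' z = F z) := by
  have hFι : F ∘ cX.ι = cY.ι ∘ f := funext hFext
  have hf : Tendsto f (cocompact X) (cocompact Y) :=
    CocompactMap.tendsto_of_forall_preimage hfproper
  refine ⟨Compactification.image_remainder_subset_remainder hf hF hFι,
    fun F' hF' hF'ι => DenseRange.equalizer cX.dense hF' hF ((funext hF'ι).trans hFι.symm), ?_⟩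
  rintro f' hf' ⟨C, hC⟩
  have hlim : ∀ z ∈ cX.remainder,
      Tendsto (cY.ι ∘ f') (comap cX.ι (𝓝 z)) (𝓝 (F z)) := fun z hz =>
    hcY.tendsto_of_eventually_dist_le (hf.mono_left (cX.comap_nhds_le_cocompact hz))
      (Eventually.of_forall hC) (hFι ▸ (hF.tendsto z).comp tendsto_comap)
  exact ⟨Function.extend cX.ι (cY.ι ∘ f') F,
    cX.emb.continuous_extend (cY.emb.continuous.comp hf') hF.continuousOn hlim,
    cX.emb.injective.extend_apply _ _,
    fun z hz => Function.extend_apply' _ _ _ fun ⟨x, hx⟩ => hz ⟨x, hx⟩⟩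

/-- Let `W_X = X ⊔ Z` and `W_Y = Y ⊔ Z'` be controlled
compactifications of proper metric spaces and `f : X → Y` a proper continuous map with a
continuous extension `F : W_X → W_Y`. Then (i) `F` maps the remainder `Z` into `Z'`;
(ii) the continuous extension of `f` is unique; and (iii) every continuous `f' : X → Y`
boundedly close to `f` extends continuously to `W_X → W_Y`, agreeing with `F` on `Z`. -/
theorem controlled_compactification_extension
    (X Y : Type) [MetricSpace X] [MetricSpace Y] [ProperSpace X] [ProperSpace Y]
    (cX : Compactification X) (cY : Compactification Y)
    (hcX : cX.Controlled) (hcY : cY.Controlled)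
    (f : X → Y) (hf : Continuous f)
    (hfproper : ∀ K : Set Y, IsCompact K → IsCompact (f ⁻¹' K))
    (F : cX.W → cY.W) (hF : Continuous F) (hFext : ∀ x : X, F (cX.ι x) = cY.ι (f x)) :
    (F '' cX.remainder ⊆ cY.remainder) ∧
    (∀ F' : cX.W → cY.W, Continuous F' →
      (∀ x : X, F' (cX.ι x) = cY.ι (f x)) → F' = F) ∧
    (∀ f' : X → Y, Continuous f' → (∃ C : ℝ, ∀ x : X, dist (f x) (f' x) ≤ C) →
      ∃ F' : cX.W → cY.W, Continuous F' ∧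
        (∀ x : X, F' (cX.ι x) = cY.ι (f' x)) ∧
        ∀ z ∈ cX.remainder, F' z = F z) :=
  controlled_compactification_extension_general X Y cX cY hcY f hfproper F hF hFext
end

section
/- Let A₁, A₂ > 0 and B₁, B₂ ∈ ℝ, and let θ: [0,∞) → [0,∞) be a differentiable monotone increasing function such that θ(x) → ∞ as x → ∞ and θ'(x) ≤ 1 for all sufficiently large x. Then lim_{x→∞} θ(log(A₁x + B₁)) / θ(log(A₂x + B₂)) = 1. -/
/-! Beyond the point where `θ' ≤ 1`, the monotone function `θ` is `1`-Lipschitz, so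
`θ(log(A₁x + B₁)) - θ(log(A₂x + B₂))` is bounded by `|log(A₁x + B₁) - log(A₂x + B₂)|`, which
converges to `|log(A₁/A₂)|`. A bounded difference is negligible against the denominator,
which tends to infinity. -/

open Filter Real Set Asymptotics Topology

theorem MonotoneOn.lipschitzOnWith_of_deriv_le {D : Set ℝ} (hD : Convex ℝ D) {f : ℝ → ℝ}
    (hmono : MonotoneOn f D) (hcont : ContinuousOn f D)
    (hdiff : DifferentiableOn ℝ f (interior D)) {C : NNReal}
    (hderiv : ∀ x ∈ interior D, deriv f x ≤ C) : LipschitzOnWith C f D := by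
  have key : ∀ x ∈ D, ∀ y ∈ D, x ≤ y → dist (f x) (f y) ≤ C * dist x y := by
    intro x hx y hy hxy
    rw [dist_comm, Real.dist_eq, Real.dist_eq, abs_of_nonneg (sub_nonneg.2 (hmono hx hy hxy)),
      abs_sub_comm, abs_of_nonneg (sub_nonneg.2 hxy)]
    exact hD.image_sub_le_mul_sub_of_deriv_le hcont hdiff hderiv x hx y hy hxy
  refine LipschitzOnWith.of_dist_le_mul fun x hx y hy => ?_
  rcases le_total x y with hxy | hyx
  · exact key x hx y hy hxy
  · rw [dist_comm, dist_comm x]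
    exact key y hy x hx hyx

theorem LipschitzOnWith.isBigO_comp_sub {E F : Type*} [SeminormedAddCommGroup E]
    [SeminormedAddCommGroup F] {f : E → F} {K : NNReal} {s : Set E} (hf : LipschitzOnWith K f s)
    {α : Type*} {l : Filter α} {u v : α → E} (hu : ∀ᶠ x in l, u x ∈ s)
    (hv : ∀ᶠ x in l, v x ∈ s) : (fun x => f (u x) - f (v x)) =O[l] fun x => u x - v x :=
  IsBigO.of_bound K <| by
    filter_upwards [hu, hv] with x hux hvx
    simpa only [dist_eq_norm] using hf.dist_le_mul _ hux _ hvx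

theorem tendsto_div_nhds_one_of_isBigO_sub_one {α : Type*} {l : Filter α} {f g : α → ℝ}
    (hfg : (fun x => f x - g x) =O[l] fun _ => (1 : ℝ)) (hg : Tendsto g l atTop) :
    Tendsto (fun x => f x / g x) l (𝓝 1) := by
  have hequiv : f ~[l] g :=
    hfg.trans_isLittleO <| (isLittleO_one_left_iff ℝ).2 (tendsto_abs_atTop_atTop.comp hg)
  exact (isEquivalent_iff_tendsto_one (hg.eventually_ne_atTop 0)).1 hequiv

theorem tendsto_log_affine_sub_log {a : ℝ} (ha : 0 < a) (b : ℝ) :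
    Tendsto (fun x => log (a * x + b) - log x) atTop (𝓝 (log a)) := by
  have hlim : Tendsto (fun x : ℝ => a + b / x) atTop (𝓝 a) := by
    simpa using tendsto_const_nhds.add ((tendsto_const_nhds (x := b)).div_atTop tendsto_id)
  refine ((continuousAt_log ha.ne').tendsto.comp hlim).congr' ?_
  filter_upwards [eventually_gt_atTop 0,
    eventually_gt_atTop (-b / a)] with x hx hxb
  have hpos : 0 < a * x + b := by
    have := (div_lt_iff₀ ha).1 hxb
    linarith
  rw [Function.comp_apply, ← log_div hpos.ne' hx.ne', add_div, mul_div_cancel_right₀ _ hx.ne']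

theorem tendsto_log_affine_sub_log_affine {a₁ a₂ : ℝ} (ha₁ : 0 < a₁) (ha₂ : 0 < a₂) (b₁ b₂ : ℝ) :
    Tendsto (fun x => log (a₁ * x + b₁) - log (a₂ * x + b₂)) atTop (𝓝 (log a₁ - log a₂)) :=
  ((tendsto_log_affine_sub_log ha₁ b₁).sub (tendsto_log_affine_sub_log ha₂ b₂)).congr
    fun x => by ring

theorem tendsto_log_affine_atTop {a : ℝ} (ha : 0 < a) (b : ℝ) :
    Tendsto (fun x => log (a * x + b)) atTop atTop :=
  tendsto_log_atTop.comp <| tendsto_atTop_add_const_right _ b (tendsto_id.const_mul_atTop ha)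

theorem tendsto_theta_log_ratio_general
    (A₁ A₂ B₁ B₂ : ℝ) (hA₁ : 0 < A₁) (hA₂ : 0 < A₂)
    (θ : ℝ → ℝ)
    (hθdiff : DifferentiableOn ℝ θ (Set.Ici 0))
    (hθmono : MonotoneOn θ (Set.Ici 0))
    (hθtop : Filter.Tendsto θ Filter.atTop Filter.atTop)
    (hθderiv : ∃ M : ℝ, ∀ x, M ≤ x → deriv θ x ≤ 1) :
    Filter.Tendsto
      (fun x : ℝ => θ (Real.log (A₁ * x + B₁)) / θ (Real.log (A₂ * x + B₂)))
      Filter.atTop (nhds 1) := by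
  obtain ⟨M, hM⟩ := hθderiv
  have hsub : Ici (max M 0) ⊆ Ici 0 := Ici_subset_Ici.2 (le_max_right _ _)
  have hlip : LipschitzOnWith 1 θ (Ici (max M 0)) := by
    refine (hθmono.mono hsub).lipschitzOnWith_of_deriv_le (convex_Ici _)
      (hθdiff.continuousOn.mono hsub) ((hθdiff.mono hsub).mono interior_subset) ?_
    rw [interior_Ici]
    exact fun x hx => by simpa using hM x ((le_max_left _ _).trans hx.le)
  have hdiff : (fun x => θ (log (A₁ * x + B₁)) - θ (log (A₂ * x + B₂))) =O[atTop]
      fun _ => (1 : ℝ) :=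
    (hlip.isBigO_comp_sub ((tendsto_log_affine_atTop hA₁ B₁).eventually_ge_atTop _)
      ((tendsto_log_affine_atTop hA₂ B₂).eventually_ge_atTop _)).trans
      ((tendsto_log_affine_sub_log_affine hA₁ hA₂ B₁ B₂).isBigO_one ℝ)
  exact tendsto_div_nhds_one_of_isBigO_sub_one hdiff (hθtop.comp (tendsto_log_affine_atTop hA₂ B₂))

/-- Let `A₁, A₂ > 0`, `B₁, B₂ ∈ ℝ`, and let `θ : [0,∞) → [0,∞)` be a
differentiable monotone increasing function with `θ(x) → ∞` and `θ'(x) ≤ 1` for all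
sufficiently large `x`. Then `θ(log(A₁x + B₁)) / θ(log(A₂x + B₂)) → 1` as `x → ∞`. -/
theorem tendsto_theta_log_ratio
    (A₁ A₂ B₁ B₂ : ℝ) (hA₁ : 0 < A₁) (hA₂ : 0 < A₂)
    (θ : ℝ → ℝ) (hθ0 : ∀ x, 0 ≤ x → 0 ≤ θ x)
    (hθdiff : DifferentiableOn ℝ θ (Set.Ici 0))
    (hθmono : MonotoneOn θ (Set.Ici 0))
    (hθtop : Filter.Tendsto θ Filter.atTop Filter.atTop)
    (hθderiv : ∃ M : ℝ, ∀ x, M ≤ x → deriv θ x ≤ 1) :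
    Filter.Tendsto
      (fun x : ℝ => θ (Real.log (A₁ * x + B₁)) / θ (Real.log (A₂ * x + B₂)))
      Filter.atTop (nhds 1) :=
  tendsto_theta_log_ratio_general A₁ A₂ B₁ B₂ hA₁ hA₂ θ hθdiff hθmono hθtop hθderiv
end
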